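/- Assume μ > 0 and 3λ + 2μ > 0 (so that λ + μ > 0) and let ω = (ω₁, ω₂, 0) be a unit vector. Define q₂⁺ := (ω₁, ω₂, i, −2iμω₁, −2iμω₂, 2μ) and q₃⁺ := (0, 0, −(λ+3μ)/(λ+μ), 2μ²ω₁/(λ+μ), 2μ²ω₂/(λ+μ), 2iμ(λ+2μ)/(λ+μ)) in ℂ⁶. Then K⁰ q₃⁺ − i q₃⁺ = q₂⁺, i.e. q₃⁺ is a generalized eigenvector of K⁰ for the eigenvalue i attached to the eigenvector q₂⁺ (the eigenvalue problem for K⁰ is degenerate). -/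

import Mathlib

/-! Split `q = (u, t)` into its two halves of length three. Multiplying the first block row
of `K⁰ q - z q = (a, b)` by `M₀` turns it into the inverse-free system
`M₀ (a + z u) = -(⟨e₃,ω⟩ u + t)`, `M₂ u + ⟨ω,e₃⟩ (a + z u) - z t = b`.
For `q = q₃⁺`, `(a, b) = q₂⁺` and `z = i` both equations are checked entrywise from the explicit
matrices `M₀ = diag(μ, μ, λ+2μ)`, `⟨e₃,ω⟩`, `⟨ω,e₃⟩`, `M₂`, using `ω₁² + ω₂² = 1` and `i² = -1`. -/

open Matrix

noncomputable section

/-- Isotropic elasticity tensor `C_{ijkl} = λ δ_{ij} δ_{kl} + μ (δ_{ik} δ_{jl} + δ_{il} δ_{jk})`. -/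
def isoC (lam mu : ℝ) (i j k l : Fin 3) : ℝ :=
  lam * (if i = j then (1:ℝ) else 0) * (if k = l then (1:ℝ) else 0)
    + mu * ((if i = k then (1:ℝ) else 0) * (if j = l then (1:ℝ) else 0)
      + (if i = l then (1:ℝ) else 0) * (if j = k then (1:ℝ) else 0))

/-- The matrix `⟨ξ,ζ⟩` with entries `⟨ξ,ζ⟩_{ik} = Σ_{j,l} C_{ijkl} ξ_j ζ_l`. -/
def bil (lam mu : ℝ) (ξ ζ : Fin 3 → ℝ) : Matrix (Fin 3) (Fin 3) ℝ :=
  Matrix.of fun i k => ∑ j, ∑ l, isoC lam mu i j k l * ξ j * ζ l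

/-- `M₀ = ⟨e₃,e₃⟩`. -/
def Mat0 (lam mu : ℝ) : Matrix (Fin 3) (Fin 3) ℝ := bil lam mu ![0,0,1] ![0,0,1]

/-- `M₁ = ⟨e₃,ω⟩ + ⟨ω,e₃⟩` for `ω = (ω₁,ω₂,0)`. -/
def Mat1 (lam mu ω1 ω2 : ℝ) : Matrix (Fin 3) (Fin 3) ℝ :=
  bil lam mu ![0,0,1] ![ω1,ω2,0] + bil lam mu ![ω1,ω2,0] ![0,0,1]

/-- `M₂ = ⟨ω,ω⟩`. -/
def Mat2 (lam mu ω1 ω2 : ℝ) : Matrix (Fin 3) (Fin 3) ℝ :=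
  bil lam mu ![ω1,ω2,0] ![ω1,ω2,0]

/-- `⟨e₃,ω⟩`. -/
def E3w (lam mu ω1 ω2 : ℝ) : Matrix (Fin 3) (Fin 3) ℝ := bil lam mu ![0,0,1] ![ω1,ω2,0]

/-- `⟨ω,e₃⟩`. -/
def wE3 (lam mu ω1 ω2 : ℝ) : Matrix (Fin 3) (Fin 3) ℝ := bil lam mu ![ω1,ω2,0] ![0,0,1]

/-- The 6×6 Stroh matrix
`K⁰ = [[−M₀⁻¹⟨e₃,ω⟩, −M₀⁻¹], [M₂ − ⟨ω,e₃⟩M₀⁻¹⟨e₃,ω⟩, −⟨ω,e₃⟩M₀⁻¹]]`. -/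
def Stroh (lam mu ω1 ω2 : ℝ) : Matrix (Fin 6) (Fin 6) ℝ :=
  Matrix.reindex finSumFinEquiv finSumFinEquiv
    (Matrix.fromBlocks
      (-((Mat0 lam mu)⁻¹ * E3w lam mu ω1 ω2)) (-(Mat0 lam mu)⁻¹)
      (Mat2 lam mu ω1 ω2 - wE3 lam mu ω1 ω2 * (Mat0 lam mu)⁻¹ * E3w lam mu ω1 ω2)
      (-(wE3 lam mu ω1 ω2 * (Mat0 lam mu)⁻¹)))

/-- Complex versions (real matrices regarded as complex matrices). -/
def Mat0c (lam mu : ℝ) : Matrix (Fin 3) (Fin 3) ℂ := (Mat0 lam mu).map Complex.ofReal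

def Mat1c (lam mu ω1 ω2 : ℝ) : Matrix (Fin 3) (Fin 3) ℂ := (Mat1 lam mu ω1 ω2).map Complex.ofReal

def Mat2c (lam mu ω1 ω2 : ℝ) : Matrix (Fin 3) (Fin 3) ℂ := (Mat2 lam mu ω1 ω2).map Complex.ofReal

def E3wc (lam mu ω1 ω2 : ℝ) : Matrix (Fin 3) (Fin 3) ℂ := (E3w lam mu ω1 ω2).map Complex.ofReal

def Strohc (lam mu ω1 ω2 : ℝ) : Matrix (Fin 6) (Fin 6) ℂ := (Stroh lam mu ω1 ω2).map Complex.ofReal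

end

section StrohSystem

variable {n R : Type*} [Fintype n] [DecidableEq n] [Ring R] {M Minv E W N : Matrix n n R}

theorem fromBlocks_stroh_mulVec_sub_smul (hinv : Minv * M = 1) {z : R} {u t a b : n → R}
    (h₁ : M *ᵥ (a + z • u) = -(E *ᵥ u + t))
    (h₂ : N *ᵥ u + W *ᵥ (a + z • u) - z • t = b) :
    fromBlocks (-(Minv * E)) (-Minv) (N - W * Minv * E) (-(W * Minv)) *ᵥ Sum.elim u t
      - z • Sum.elim u t = Sum.elim a b := by
  have hsolve : Minv *ᵥ (-(E *ᵥ u + t)) = a + z • u := by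
    rw [← h₁, mulVec_mulVec, hinv, one_mulVec]
  have hu : -(Minv * E) *ᵥ u + -Minv *ᵥ t = a + z • u := by
    rw [← hsolve, mulVec_neg, mulVec_add, mulVec_mulVec, neg_mulVec, neg_mulVec, neg_add]
  have ht : (N - W * Minv * E) *ᵥ u + -(W * Minv) *ᵥ t = N *ᵥ u + W *ᵥ (a + z • u) := by
    simp only [← hsolve, sub_mulVec, neg_mulVec, ← mulVec_mulVec, mulVec_neg, mulVec_add]
    abel
  rw [fromBlocks_mulVec, Sum.elim_comp_inl, Sum.elim_comp_inr, hu, ht]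
  ext (i | i)
  · simp
  · simp [← h₂]

end StrohSystem

theorem reindex_mulVec_comp_symm {m n R : Type*} [Fintype m] [Fintype n]
    [NonUnitalNonAssocSemiring R] (e : m ≃ n) (K : Matrix m m R) (v : m → R) :
    reindex e e K *ᵥ (v ∘ e.symm) = (K *ᵥ v) ∘ e.symm := by
  rw [reindex_apply, submatrix_mulVec_equiv, Equiv.symm_symm, Function.comp_assoc,
    Equiv.symm_comp_self, Function.comp_id]

theorem vecCons6_eq_sum_elim_comp {α : Type*} (a₀ a₁ a₂ b₀ b₁ b₂ : α) :
    ![a₀, a₁, a₂, b₀, b₁, b₂] = Sum.elim ![a₀, a₁, a₂] ![b₀, b₁, b₂] ∘ finSumFinEquiv.symm := by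
  ext i
  fin_cases i <;> rfl

theorem map_ofReal_mul {l m n : Type*} [Fintype m] (A : Matrix l m ℝ) (B : Matrix m n ℝ) :
    (A * B).map Complex.ofReal = A.map Complex.ofReal * B.map Complex.ofReal :=
  Matrix.map_mul (f := Complex.ofRealHom)

section Elasticity

variable (lam mu ω1 ω2 : ℝ)

theorem Mat0_eq : Mat0 lam mu = !![mu, 0, 0; 0, mu, 0; 0, 0, lam + 2 * mu] := by
  ext i k
  fin_cases i <;> fin_cases k <;> simp [Mat0, bil, isoC, Fin.sum_univ_succ]
  ring

theorem E3w_eq : E3w lam mu ω1 ω2 = !![0, 0, mu * ω1; 0, 0, mu * ω2; lam * ω1, lam * ω2, 0] := by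
  ext i k
  fin_cases i <;> fin_cases k <;> simp [E3w, bil, isoC, Fin.sum_univ_succ]

theorem wE3_eq : wE3 lam mu ω1 ω2 = !![0, 0, lam * ω1; 0, 0, lam * ω2; mu * ω1, mu * ω2, 0] := by
  ext i k
  fin_cases i <;> fin_cases k <;> simp [wE3, bil, isoC, Fin.sum_univ_succ]

theorem Mat2_eq : Mat2 lam mu ω1 ω2 =
    !![(lam + 2 * mu) * ω1 ^ 2 + mu * ω2 ^ 2, (lam + mu) * ω1 * ω2, 0;
      (lam + mu) * ω1 * ω2, (lam + 2 * mu) * ω2 ^ 2 + mu * ω1 ^ 2, 0;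
      0, 0, mu * (ω1 ^ 2 + ω2 ^ 2)] := by
  ext i k
  fin_cases i <;> fin_cases k <;> simp [Mat2, bil, isoC, Fin.sum_univ_succ] <;> ring

theorem Strohc_eq_reindex_fromBlocks :
    Strohc lam mu ω1 ω2 = reindex finSumFinEquiv finSumFinEquiv
      (fromBlocks (-((Mat0 lam mu)⁻¹.map Complex.ofReal * E3wc lam mu ω1 ω2))
        (-(Mat0 lam mu)⁻¹.map Complex.ofReal)
        (Mat2c lam mu ω1 ω2 - (wE3 lam mu ω1 ω2).map Complex.ofReal *
          (Mat0 lam mu)⁻¹.map Complex.ofReal * E3wc lam mu ω1 ω2)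
        (-((wE3 lam mu ω1 ω2).map Complex.ofReal * (Mat0 lam mu)⁻¹.map Complex.ofReal))) := by
  rw [Strohc, Stroh, reindex_apply, reindex_apply, ← submatrix_map, fromBlocks_map]
  simp only [Matrix.map_neg _ Complex.ofReal_neg, Matrix.map_sub _ Complex.ofReal_sub,
    map_ofReal_mul, Mat2c, E3wc]

end Elasticity

theorem isUnit_det_Mat0 {lam mu : ℝ} (hmu : mu ≠ 0) (hlm : lam + 2 * mu ≠ 0) :
    IsUnit (Mat0 lam mu).det := by
  rw [Mat0_eq, det_fin_three]
  simp [hmu, hlm]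

/-- `q₃⁺ = (0, 0, −(λ+3μ)/(λ+μ), 2μ²ω₁/(λ+μ), 2μ²ω₂/(λ+μ), 2iμ(λ+2μ)/(λ+μ))` is a
generalized eigenvector of the Stroh matrix `K⁰` for the eigenvalue `i` attached to the
eigenvector `q₂⁺ = (ω₁, ω₂, i, −2iμω₁, −2iμω₂, 2μ)`:  `K⁰ q₃⁺ − i q₃⁺ = q₂⁺`. -/
theorem stmt4 (lam mu ω1 ω2 : ℝ) (hmu : 0 < mu) (hconv : 0 < 3 * lam + 2 * mu)
    (hω : ω1 ^ 2 + ω2 ^ 2 = 1) :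
    Strohc lam mu ω1 ω2 *ᵥ
        (![0, 0, -(((lam : ℂ) + 3 * mu) / ((lam : ℂ) + mu)),
            2 * (mu : ℂ) ^ 2 * ω1 / ((lam : ℂ) + mu),
            2 * (mu : ℂ) ^ 2 * ω2 / ((lam : ℂ) + mu),
            2 * Complex.I * mu * ((lam : ℂ) + 2 * mu) / ((lam : ℂ) + mu)] : Fin 6 → ℂ)
      - Complex.I •
        (![0, 0, -(((lam : ℂ) + 3 * mu) / ((lam : ℂ) + mu)),
            2 * (mu : ℂ) ^ 2 * ω1 / ((lam : ℂ) + mu),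
            2 * (mu : ℂ) ^ 2 * ω2 / ((lam : ℂ) + mu),
            2 * Complex.I * mu * ((lam : ℂ) + 2 * mu) / ((lam : ℂ) + mu)] : Fin 6 → ℂ)
      = (![(ω1 : ℂ), (ω2 : ℂ), Complex.I, -(2 * Complex.I * mu * ω1),
            -(2 * Complex.I * mu * ω2), 2 * (mu : ℂ)] : Fin 6 → ℂ) := by
  have hlm : lam + 2 * mu ≠ 0 := by linarith
  have hlm' : (lam : ℂ) + mu ≠ 0 := by exact_mod_cast (by linarith : lam + mu ≠ 0)
  have hinv : (Mat0 lam mu)⁻¹.map Complex.ofReal * Mat0c lam mu = 1 := by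
    rw [Mat0c, ← map_ofReal_mul, nonsing_inv_mul _ (isUnit_det_Mat0 hmu.ne' hlm)]
    exact Matrix.map_one _ Complex.ofReal_zero Complex.ofReal_one
  simp only [vecCons6_eq_sum_elim_comp]
  rw [Strohc_eq_reindex_fromBlocks, reindex_mulVec_comp_symm, ← Pi.smul_comp, ← Pi.sub_comp]
  congr 1
  apply fromBlocks_stroh_mulVec_sub_smul hinv
  · rw [Mat0c, Mat0_eq, E3wc, E3w_eq]
    ext i
    fin_cases i <;> simp [mulVec, dotProduct, Fin.sum_univ_succ, vecHead, vecTail] <;>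
      field_simp <;> ring
  · have hωc : (ω1 : ℂ) ^ 2 + (ω2 : ℂ) ^ 2 = 1 := by exact_mod_cast hω
    rw [Mat2c, Mat2_eq, wE3_eq]
    ext i
    fin_cases i <;> simp [mulVec, dotProduct, Fin.sum_univ_succ, vecHead, vecTail] <;> field_simp
    · ring
    · ring
    · linear_combination (-2 * (mu : ℂ) ^ 2) * hωc - 2 * (mu : ℂ) * (lam + 2 * mu) * Complex.I_sq
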